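/- arXiv:0802.0612 — 3 statements merged into one kernel-verified Lean document; each statement's English description precedes it below -/
import Mathlib

section
/- Let Q ⊂ ℝ^n be a full-dimensional simplicial convex polytope with 0 in its interior, with weight function a : V(Q) → ℝ_{>0}. Let u ∈ V(Q) and v ∈ V(Q*) satisfy u ∉ F_v and a(u)(1+⟨v,u⟩) = ε_Q. Let e_1,…,e_n be the vertices of F_v (a basis of ℝ^n), with dual basis (e_1*,…,e_n*), and for j ∈ {1,…,n} let F_j be the unique facet of Q distinct from F_v containing all e_i with i ≠ j. Then for every j ∈ {1,…,n}: u ∈ F_j if and only if ⟨e_j*,u⟩ < 0 (equivalently, u ∉ F_j if and only if ⟨e_j*,u⟩ ≥ 0). -/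
/-!
Write `c_j = ⟨e_j*, u⟩` for the coordinates of `u` in the basis `e`. Since `v` and `v^j` agree
on every `e_i` with `i ≠ j`, they differ by a multiple of `e_j*`, and
`⟨v^j, u⟩ = ⟨v, u⟩ + c_j (⟨v^j, e_j⟩ + 1)` with `⟨v^j, e_j⟩ + 1 > 0` because `v^j ≠ v`.
If `u ∈ F_j` the left side is `-1`, which is below `⟨v, u⟩`, forcing `c_j < 0`. Conversely, if
`c_j < 0` and `u ∉ F_j`, the pair `(u, v^j)` would give
`a(u)(1 + ⟨v^j, u⟩) < a(u)(1 + ⟨v, u⟩) = ε_Q`, contradicting minimality.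
-/

open Matrix

/-- The polar dual `Q* = {v | ⟨v,u⟩ ≥ -1 for all u ∈ Q}`. -/
def polarDual {n : ℕ} (Q : Set (Fin n → ℝ)) : Set (Fin n → ℝ) :=
  {v | ∀ u ∈ Q, -1 ≤ v ⬝ᵥ u}

/-- The set of numbers `a(u)(1 + ⟨v,u⟩)` for `u ∈ V(Q)`, `v ∈ V(Q*)`, `u ∉ F_v`;
`ε_Q` is its minimum. -/
def epsSet {n : ℕ} (VQ VQd : Finset (Fin n → ℝ)) (a : (Fin n → ℝ) → ℝ) : Set ℝ :=
  {x | ∃ u ∈ VQ, ∃ v ∈ VQd, v ⬝ᵥ u ≠ -1 ∧ x = a u * (1 + v ⬝ᵥ u)}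

section DualBasis

variable {R ι : Type*} [CommRing R] [Fintype ι] [DecidableEq ι] {e estar : ι → ι → R}

theorem dotProduct_eq_sum_mul_of_dual (hdual : ∀ i k, estar i ⬝ᵥ e k = if i = k then 1 else 0)
    (w x : ι → R) : w ⬝ᵥ x = ∑ i, w ⬝ᵥ e i * estar i ⬝ᵥ x := by
  have hSE : of estar * (of e)ᵀ = 1 := by
    ext i k
    simpa [mul_apply, one_apply, dotProduct] using hdual i k
  calc w ⬝ᵥ x = w ⬝ᵥ ((of e)ᵀ * of estar) *ᵥ x := by rw [mul_eq_one_comm.mp hSE, one_mulVec]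
    _ = (w ᵥ* (of e)ᵀ) ⬝ᵥ (of estar *ᵥ x) := by rw [← mulVec_mulVec, dotProduct_mulVec]
    _ = ∑ i, w ⬝ᵥ e i * estar i ⬝ᵥ x := by
      simp only [vecMul_transpose, dotProduct, mulVec, of_apply]
      simp only [mul_comm (w _)]

theorem dotProduct_eq_add_mul_of_dotProduct_eq_of_ne
    (hdual : ∀ i k, estar i ⬝ᵥ e k = if i = k then 1 else 0) {v w : ι → R} {j : ι}
    (hvw : ∀ i ≠ j, w ⬝ᵥ e i = v ⬝ᵥ e i) (x : ι → R) :
    w ⬝ᵥ x = v ⬝ᵥ x + (w ⬝ᵥ e j - v ⬝ᵥ e j) * estar j ⬝ᵥ x := by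
  rw [← sub_eq_iff_eq_add', ← sub_dotProduct, ← sub_dotProduct,
    dotProduct_eq_sum_mul_of_dual hdual, Finset.sum_eq_single j
      (fun i _ hi => by rw [sub_dotProduct, hvw i hi, sub_self, zero_mul]) (by simp)]

theorem dotProduct_lt_of_dotProduct_eq_of_ne [PartialOrder R]
    (hdual : ∀ i k, estar i ⬝ᵥ e k = if i = k then 1 else 0) {v w : ι → R} {j : ι}
    (hne : w ≠ v) (hvw : ∀ i ≠ j, w ⬝ᵥ e i = v ⬝ᵥ e i) (hle : v ⬝ᵥ e j ≤ w ⬝ᵥ e j) :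
    v ⬝ᵥ e j < w ⬝ᵥ e j := by
  refine hle.lt_of_ne fun heq => hne (dotProduct_eq _ _ fun x => ?_)
  rw [dotProduct_eq_add_mul_of_dotProduct_eq_of_ne hdual hvw, heq, sub_self, zero_mul, add_zero]

end DualBasis

theorem minimizing_vertex_facet_membership_general {n : ℕ}
    (VQ VQd : Finset (Fin n → ℝ))
    -- `VQd` is the vertex set of the polar dual `Q*`
    (hVQd : (VQd : Set (Fin n → ℝ)) =
      Set.extremePoints ℝ (polarDual (convexHull ℝ (VQ : Set (Fin n → ℝ)))))
    -- the weight function `a : V(Q) → ℝ_{>0}`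
    (a : (Fin n → ℝ) → ℝ) (ha : ∀ u ∈ VQ, 0 < a u)
    -- `ε` is the minimum `ε_Q`
    (ε : ℝ) (hε : IsLeast (epsSet VQ VQd a) ε)
    -- `(u, v)` realizes the minimum, with `u ∉ F_v`
    (u v : Fin n → ℝ) (hu : u ∈ VQ) (hv : v ∈ VQd)
    (huFv : v ⬝ᵥ u ≠ -1) (hmin : a u * (1 + v ⬝ᵥ u) = ε)
    -- `e_1, …, e_n` are the vertices of the facet `F_v`
    (e : Fin n → (Fin n → ℝ))
    (heV : ∀ i, e i ∈ VQ) (heF : ∀ i, v ⬝ᵥ e i = -1)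
    -- `(e_1*, …, e_n*)` is the dual basis of `(e_1, …, e_n)`
    (estar : Fin n → (Fin n → ℝ))
    (hestar : ∀ i k, estar i ⬝ᵥ e k = if i = k then 1 else 0)
    -- for each `j`, `F_j` is the facet of `Q` distinct from `F_v` containing all `e_i`,
    -- `i ≠ j`; its corresponding dual vertex is `vj j ∈ V(Q*)`
    (vj : Fin n → (Fin n → ℝ)) (hvj : ∀ j, vj j ∈ VQd) (hvjne : ∀ j, vj j ≠ v)
    (hvje : ∀ j i, i ≠ j → vj j ⬝ᵥ e i = -1) :
    ∀ j, (vj j ⬝ᵥ u = -1 ↔ estar j ⬝ᵥ u < 0) := by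
  intro j
  have hpolar : ∀ w ∈ VQd, ∀ x ∈ VQ, -1 ≤ w ⬝ᵥ x := fun w hw x hx =>
    (extremePoints_subset (hVQd ▸ Finset.mem_coe.mpr hw) : w ∈ polarDual _) x
      (subset_convexHull ℝ _ hx)
  have hvu : -1 < v ⬝ᵥ u := (hpolar v hv u hu).lt_of_ne' huFv
  have hagree : ∀ i ≠ j, vj j ⬝ᵥ e i = v ⬝ᵥ e i := fun i hi => (hvje j i hi).trans (heF i).symm
  have hgap : 0 < vj j ⬝ᵥ e j - v ⬝ᵥ e j := sub_pos.mpr <|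
    dotProduct_lt_of_dotProduct_eq_of_ne hestar (hvjne j) hagree
      ((heF j).trans_le (hpolar _ (hvj j) _ (heV j)))
  have hkey := dotProduct_eq_add_mul_of_dotProduct_eq_of_ne hestar hagree u
  constructor
  · intro hF
    by_contra! hc
    linarith [mul_nonneg hgap.le hc]
  · intro hc
    by_contra hne
    have hle : ε ≤ a u * (1 + vj j ⬝ᵥ u) := hε.2 ⟨u, hu, vj j, hvj j, hne, rfl⟩
    have hdrop : a u * ((vj j ⬝ᵥ e j - v ⬝ᵥ e j) * estar j ⬝ᵥ u) < 0 :=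
      mul_neg_of_pos_of_neg (ha u hu) (mul_neg_of_pos_of_neg hgap hc)
    rw [hkey, ← hmin] at hle
    linarith

/-- Let `(u,v)` realize the minimum `ε_Q`, with `u ∉ F_v`.  Let
`e_1, …, e_n` be the vertices of `F_v`, with dual basis `(e_1*, …, e_n*)`, and for each `j`
let `F_j` be the facet of `Q` distinct from `F_v` containing all `e_i`, `i ≠ j` (with
corresponding dual vertex `v^j ∈ V(Q*)`).  Then for every `j`:
`u ∈ F_j ↔ ⟨e_j*, u⟩ < 0`. -/
theorem minimizing_vertex_facet_membership {n : ℕ} (hn : 1 ≤ n)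
    (VQ VQd : Finset (Fin n → ℝ))
    -- `VQ` is the vertex set of the polytope `Q = conv(VQ)`
    (hVQ : (VQ : Set (Fin n → ℝ)) =
      Set.extremePoints ℝ (convexHull ℝ (VQ : Set (Fin n → ℝ))))
    -- `0` lies in the interior of `Q` (in particular `Q` is full-dimensional)
    (h0 : (0 : Fin n → ℝ) ∈ interior (convexHull ℝ (VQ : Set (Fin n → ℝ))))
    -- `VQd` is the vertex set of the polar dual `Q*`
    (hVQd : (VQd : Set (Fin n → ℝ)) =
      Set.extremePoints ℝ (polarDual (convexHull ℝ (VQ : Set (Fin n → ℝ)))))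
    -- `Q` is simplicial: every facet has exactly `n` vertices
    (hsimp : ∀ v ∈ VQd, (VQ.filter fun u => v ⬝ᵥ u = -1).card = n)
    -- the weight function `a : V(Q) → ℝ_{>0}`
    (a : (Fin n → ℝ) → ℝ) (ha : ∀ u ∈ VQ, 0 < a u)
    -- `ε` is the minimum `ε_Q`
    (ε : ℝ) (hε : IsLeast (epsSet VQ VQd a) ε)
    -- `(u, v)` realizes the minimum, with `u ∉ F_v`
    (u v : Fin n → ℝ) (hu : u ∈ VQ) (hv : v ∈ VQd)
    (huFv : v ⬝ᵥ u ≠ -1) (hmin : a u * (1 + v ⬝ᵥ u) = ε)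
    -- `e_1, …, e_n` are the vertices of the facet `F_v`
    (e : Fin n → (Fin n → ℝ)) (he : Function.Injective e)
    (heV : ∀ i, e i ∈ VQ) (heF : ∀ i, v ⬝ᵥ e i = -1)
    (heAll : ∀ w ∈ VQ, v ⬝ᵥ w = -1 → ∃ i, w = e i)
    -- `(e_1*, …, e_n*)` is the dual basis of `(e_1, …, e_n)`
    (estar : Fin n → (Fin n → ℝ))
    (hestar : ∀ i k, estar i ⬝ᵥ e k = if i = k then 1 else 0)
    -- for each `j`, `F_j` is the facet of `Q` distinct from `F_v` containing all `e_i`,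
    -- `i ≠ j`; its corresponding dual vertex is `vj j ∈ V(Q*)`
    (vj : Fin n → (Fin n → ℝ)) (hvj : ∀ j, vj j ∈ VQd) (hvjne : ∀ j, vj j ≠ v)
    (hvje : ∀ j i, i ≠ j → vj j ⬝ᵥ e i = -1) :
    ∀ j, (vj j ⬝ᵥ u = -1 ↔ estar j ⬝ᵥ u < 0) :=
  minimizing_vertex_facet_membership_general VQ VQd hVQd a ha ε hε u v hu hv huFv hmin e heV heF
    estar hestar vj hvj hvjne hvje
end

section
/- Let Q ⊂ ℝ^n be a full-dimensional simplicial convex polytope with 0 in its interior, with weight function a : V(Q) → ℝ_{>0}. Then ε_Q · (|V(Q)| − n) ≤ Σ_{u∈V(Q)} a(u). -/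
/-!
Since `0` is interior to `Q`, the polar dual `Q*` is a compact convex set, hence the convex hull
of its finitely many vertices; as `0 ∈ Q*`, some vertex `v` of `Q*` pairs non-positively with
`w = Σ_u a(u) u`. Summing `ε_Q ≤ a(u)(1 + ⟨v,u⟩)` over the `|V(Q)| - n` vertices off the facet
`F_v` gives `ε_Q (|V(Q)| - n) ≤ Σ_u a(u)(1 + ⟨v,u⟩) = Σ_u a(u) + ⟨v,w⟩ ≤ Σ_u a(u)`.
-/

open Matrix

theorem convexHull_extremePoints_eq_of_finite {E : Type*} [AddCommGroup E] [Module ℝ E]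
    [TopologicalSpace E] [T2Space E] [IsTopologicalAddGroup E] [ContinuousSMul ℝ E]
    [LocallyConvexSpace ℝ E] {s : Set E} (hcomp : IsCompact s) (hconv : Convex ℝ s)
    (hfin : (s.extremePoints ℝ).Finite) :
    convexHull ℝ (s.extremePoints ℝ) = s := by
  simpa only [(hfin.isClosed_convexHull ℝ).closure_eq] using
    closure_convexHull_extremePoints hcomp hconv

theorem exists_nonpos_of_zero_mem_convexHull {E : Type*} [AddCommGroup E] [Module ℝ E]
    {f : E → ℝ} (hf : IsLinearMap ℝ f) {s : Set E} (h0 : 0 ∈ convexHull ℝ s) :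
    ∃ x ∈ s, f x ≤ 0 := by
  by_contra! hpos
  have : 0 < f 0 := convexHull_min hpos (convex_halfSpace_gt hf 0) h0
  simp [hf.map_zero] at this

section PolarDual

variable {n : ℕ}

theorem isLinearMap_dotProduct_left (u : Fin n → ℝ) : IsLinearMap ℝ fun v => v ⬝ᵥ u :=
  ⟨fun x y => add_dotProduct x y u, fun c x => smul_dotProduct c x u⟩

theorem polarDual_eq_biInter (Q : Set (Fin n → ℝ)) :
    polarDual Q = ⋂ u ∈ Q, {v | -1 ≤ v ⬝ᵥ u} := by
  ext v
  simp [polarDual]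

theorem zero_mem_polarDual (Q : Set (Fin n → ℝ)) : 0 ∈ polarDual Q := fun u _ => by simp

theorem convex_polarDual (Q : Set (Fin n → ℝ)) : Convex ℝ (polarDual Q) := by
  rw [polarDual_eq_biInter]
  exact convex_iInter₂ fun u _ => convex_halfSpace_ge (isLinearMap_dotProduct_left u) (-1)

theorem isClosed_polarDual (Q : Set (Fin n → ℝ)) : IsClosed (polarDual Q) := by
  rw [polarDual_eq_biInter]
  exact isClosed_biInter fun u _ =>
    isClosed_le continuous_const (continuous_id.dotProduct continuous_const)

theorem isBounded_polarDual {Q : Set (Fin n → ℝ)} (h0 : 0 ∈ interior Q) :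
    Bornology.IsBounded (polarDual Q) := by
  obtain ⟨r, hr, hball⟩ :=
    Metric.nhds_basis_closedBall.mem_iff.mp (mem_interior_iff_mem_nhds.mp h0)
  refine isBounded_iff_forall_norm_le.mpr ⟨r⁻¹, fun v hv => ?_⟩
  refine (pi_norm_le_iff_of_nonneg (by positivity)).mpr fun i => ?_
  have hsingle : ∀ t : ℝ, |t| ≤ r → -1 ≤ v i * t := fun t ht => by
    have hmem : Pi.single i t ∈ Q := hball <| by simpa [Pi.norm_single] using ht
    simpa [dotProduct_single] using hv _ hmem
  have hplus := hsingle r (by rw [abs_of_pos hr])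
  have hminus := hsingle (-r) (by rw [abs_neg, abs_of_pos hr])
  rw [Real.norm_eq_abs, abs_le, ← one_div, ← neg_div, div_le_iff₀ hr, le_div_iff₀ hr]
  constructor <;> linarith

theorem isCompact_polarDual {Q : Set (Fin n → ℝ)} (h0 : 0 ∈ interior Q) :
    IsCompact (polarDual Q) :=
  Metric.isCompact_of_isClosed_isBounded (isClosed_polarDual Q) (isBounded_polarDual h0)

end PolarDual

theorem sum_filter_mul_one_add_dotProduct {n : ℕ} (s : Finset (Fin n → ℝ)) (a : (Fin n → ℝ) → ℝ)
    (v : Fin n → ℝ) :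
    ∑ u ∈ s with v ⬝ᵥ u ≠ -1, a u * (1 + v ⬝ᵥ u) = ∑ u ∈ s, a u + v ⬝ᵥ ∑ u ∈ s, a u • u := by
  rw [Finset.sum_filter_of_ne (p := fun u => v ⬝ᵥ u ≠ -1) fun u _ hu h => hu (by rw [h]; ring),
    dotProduct_sum, ← Finset.sum_add_distrib]
  refine Finset.sum_congr rfl fun u _ => ?_
  rw [dotProduct_smul, smul_eq_mul]
  ring

theorem eps_card_inequality_general {n : ℕ}
    (VQ VQd : Finset (Fin n → ℝ))
    -- `0` lies in the interior of `Q` (in particular `Q` is full-dimensional)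
    (h0 : (0 : Fin n → ℝ) ∈ interior (convexHull ℝ (VQ : Set (Fin n → ℝ))))
    -- `VQd` is the vertex set of the polar dual `Q*`
    (hVQd : (VQd : Set (Fin n → ℝ)) =
      Set.extremePoints ℝ (polarDual (convexHull ℝ (VQ : Set (Fin n → ℝ)))))
    -- `Q` is simplicial: every facet has exactly `n` vertices
    (hsimp : ∀ v ∈ VQd, (VQ.filter fun u => v ⬝ᵥ u = -1).card = n)
    -- the weight function `a : V(Q) → ℝ_{>0}`
    (a : (Fin n → ℝ) → ℝ)
    -- `ε` is the minimum `ε_Q`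
    (ε : ℝ) (hε : IsLeast (epsSet VQ VQd a) ε) :
    ε * ((VQ.card : ℝ) - n) ≤ ∑ u ∈ VQ, a u := by
  set Q := convexHull ℝ (VQ : Set (Fin n → ℝ))
  have hdual : convexHull ℝ (VQd : Set (Fin n → ℝ)) = polarDual Q := by
    rw [hVQd]
    exact convexHull_extremePoints_eq_of_finite (isCompact_polarDual h0) (convex_polarDual Q)
      (hVQd ▸ VQd.finite_toSet)
  obtain ⟨v, hv, hvw⟩ := exists_nonpos_of_zero_mem_convexHull
    (isLinearMap_dotProduct_left (∑ u ∈ VQ, a u • u)) (hdual ▸ zero_mem_polarDual Q)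
  have hcard : ({u ∈ VQ | v ⬝ᵥ u ≠ -1}.card : ℝ) = VQ.card - n := by
    have hsplit := Finset.card_filter_add_card_filter_not (s := VQ) (fun u => v ⬝ᵥ u = -1)
    rw [hsimp v hv] at hsplit
    exact eq_sub_of_add_eq' (by exact_mod_cast hsplit)
  calc ε * ((VQ.card : ℝ) - n) = ∑ u ∈ VQ with v ⬝ᵥ u ≠ -1, ε := by
        rw [Finset.sum_const, nsmul_eq_mul, hcard, mul_comm]
    _ ≤ ∑ u ∈ VQ with v ⬝ᵥ u ≠ -1, a u * (1 + v ⬝ᵥ u) := Finset.sum_le_sum fun u hu =>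
        hε.2 ⟨u, (Finset.mem_filter.1 hu).1, v, hv, (Finset.mem_filter.1 hu).2, rfl⟩
    _ = ∑ u ∈ VQ, a u + v ⬝ᵥ ∑ u ∈ VQ, a u • u := sum_filter_mul_one_add_dotProduct VQ a v
    _ ≤ ∑ u ∈ VQ, a u := by linarith

/-- For a full-dimensional simplicial polytope `Q` with `0` in its interior
and weight function `a`, one has `ε_Q · (|V(Q)| - n) ≤ Σ_{u ∈ V(Q)} a(u)`. -/
theorem eps_card_inequality {n : ℕ} (hn : 1 ≤ n)
    (VQ VQd : Finset (Fin n → ℝ))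
    -- `VQ` is the vertex set of the polytope `Q = conv(VQ)`
    (hVQ : (VQ : Set (Fin n → ℝ)) =
      Set.extremePoints ℝ (convexHull ℝ (VQ : Set (Fin n → ℝ))))
    -- `0` lies in the interior of `Q` (in particular `Q` is full-dimensional)
    (h0 : (0 : Fin n → ℝ) ∈ interior (convexHull ℝ (VQ : Set (Fin n → ℝ))))
    -- `VQd` is the vertex set of the polar dual `Q*`
    (hVQd : (VQd : Set (Fin n → ℝ)) =
      Set.extremePoints ℝ (polarDual (convexHull ℝ (VQ : Set (Fin n → ℝ)))))
    -- `Q` is simplicial: every facet has exactly `n` vertices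
    (hsimp : ∀ v ∈ VQd, (VQ.filter fun u => v ⬝ᵥ u = -1).card = n)
    -- the weight function `a : V(Q) → ℝ_{>0}`
    (a : (Fin n → ℝ) → ℝ) (ha : ∀ u ∈ VQ, 0 < a u)
    -- `ε` is the minimum `ε_Q`
    (ε : ℝ) (hε : IsLeast (epsSet VQ VQd a) ε) :
    ε * ((VQ.card : ℝ) - n) ≤ ∑ u ∈ VQ, a u :=
  eps_card_inequality_general VQ VQd h0 hVQd hsimp a ε hε
end

section
/- Let Q ⊂ ℝ^n be a full-dimensional simplicial reflexive polytope, with constant weight function a ≡ 1, so that ε_Q = min{ 1+⟨v,u⟩ : u ∈ V(Q), v ∈ V(Q*), u ∉ F_v }. Then ι_Q ≤ ε_Q. -/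
/-!
Take `ε = 1 + ⟨v₀, u₀⟩` with `u₀ ∉ F_{v₀}`. Since `v₀` is a vertex of `Q*`, the `n` vertices `b_i`
of the simplicial facet `F_{v₀}` form a basis, and since `ε > 0`, `u₀` is a vertex of `Q` and `0`
is interior, some coordinate `c_j` of `u₀ = ∑ c_i b_i` is negative. Let `ψ` be the dual
functional, `⟨ψ, b_i⟩ = δ_ij`. Rotating `v₀ + tψ` about the ridge `μ = conv {b_i | i ≠ j}` until
it meets a new vertex `w` produces the adjacent vertex `v'` of `Q*` with `F_{v'} = μ ∪ {w}`, and
`t ≤ ε / ⟨-ψ, u₀⟩`. By Cramer's rule `ψ` is rational, so `χ_μ = s • (-ψ)` for some `s > 0`, and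
the corresponding ι-value is `t / s ≤ ε / ⟨χ_μ, u₀⟩ ≤ ε`, as `⟨χ_μ, u₀⟩` is a positive integer.
-/

open Matrix

/-- A vector of `ℝ^n` is integral if all its coordinates are integers. -/
def isIntegral {n : ℕ} (u : Fin n → ℝ) : Prop := ∀ i, ∃ z : ℤ, u i = (z : ℝ)

/-- A vector of `(ℝ^n)*` is a primitive element of the dual lattice `(ℤ^n)*` if its
coordinates are integers whose gcd is `1`. -/
def isPrimitive {n : ℕ} (χ : Fin n → ℝ) : Prop :=
  ∃ c : Fin n → ℤ, (∀ i, χ i = (c i : ℝ)) ∧ Finset.univ.gcd c = 1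

/-- The set of numbers `(1 + ⟨v,u⟩)/⟨χ_μ,u⟩` over all `(n-2)`-dimensional faces `μ` of the
simplicial reflexive polytope `Q` and both orderings `(F_v, F_{v'})` of the two facets of `Q`
containing `μ`; here `u` is the unique vertex of `F_{v'}` not lying in `μ` (encoded as: `u` is
a vertex of `F_{v'}` not in `F_v`, and all other vertices of `F_{v'}` lie in `F_v`), and
`χ_μ` is the primitive element of `(ℤ^n)*` vanishing on the linear span of `μ` (i.e. on all
vertices of `F_{v'}` other than `u`) with `⟨χ_μ,u⟩ > 0`.  `ι_Q` is its minimum. -/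
def iotaSet {n : ℕ} (VQ VQd : Finset (Fin n → ℝ)) : Set ℝ :=
  {x | ∃ v ∈ VQd, ∃ v' ∈ VQd, v ≠ v' ∧ ∃ u ∈ VQ,
    v' ⬝ᵥ u = -1 ∧ v ⬝ᵥ u ≠ -1 ∧
    (∀ w ∈ VQ, v' ⬝ᵥ w = -1 → w ≠ u → v ⬝ᵥ w = -1) ∧
    ∃ χ : Fin n → ℝ, isPrimitive χ ∧
      (∀ w ∈ VQ, v' ⬝ᵥ w = -1 → w ≠ u → χ ⬝ᵥ w = 0) ∧
      0 < χ ⬝ᵥ u ∧ x = (1 + v ⬝ᵥ u) / (χ ⬝ᵥ u)}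

section PolarDual

variable {n : ℕ}

lemma mem_polarDual_convexHull_iff {S : Set (Fin n → ℝ)} {v : Fin n → ℝ} :
    v ∈ polarDual (convexHull ℝ S) ↔ ∀ u ∈ S, -1 ≤ v ⬝ᵥ u := by
  refine ⟨fun hv u hu => hv u (subset_convexHull ℝ S hu), fun hv => ?_⟩
  have hconv : Convex ℝ {u : Fin n → ℝ | -1 ≤ v ⬝ᵥ u} :=
    convex_halfSpace_ge ⟨dotProduct_add v, fun c x => dotProduct_smul c v x⟩ (-1)
  exact fun u hu => convexHull_min hv hconv hu

noncomputable def facet (S : Finset (Fin n → ℝ)) (v : Fin n → ℝ) : Finset (Fin n → ℝ) :=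
  S.filter fun u => v ⬝ᵥ u = -1

lemma mem_facet {S : Finset (Fin n → ℝ)} {v u : Fin n → ℝ} :
    u ∈ facet S v ↔ u ∈ S ∧ v ⬝ᵥ u = -1 :=
  Finset.mem_filter

open Filter Topology in
lemma eq_zero_of_mem_extremePoints_polarDual {S : Finset (Fin n → ℝ)} {v ψ : Fin n → ℝ}
    (hv : v ∈ (polarDual (convexHull ℝ (S : Set (Fin n → ℝ)))).extremePoints ℝ)
    (hψ : ∀ w ∈ facet S v, ψ ⬝ᵥ w = 0) : ψ = 0 := by
  have hnear : ∀ᶠ s : ℝ in 𝓝 0, v + s • ψ ∈ polarDual (convexHull ℝ (S : Set (Fin n → ℝ))) := by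
    simp only [mem_polarDual_convexHull_iff, Finset.mem_coe, eventually_all_finset]
    intro w hw
    by_cases hvw : v ⬝ᵥ w = -1
    · filter_upwards with s
      rw [add_dotProduct, smul_dotProduct, hψ w (mem_facet.2 ⟨hw, hvw⟩), hvw, smul_zero, add_zero]
    · have hlt : -1 < (v + (0 : ℝ) • ψ) ⬝ᵥ w := by
        rw [zero_smul, add_zero]
        exact lt_of_le_of_ne (hv.1 w (subset_convexHull ℝ _ hw)) (Ne.symm hvw)
      have hcont : Continuous fun s : ℝ => (v + s • ψ) ⬝ᵥ w := by fun_prop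
      exact ((hcont.tendsto 0).eventually (lt_mem_nhds hlt)).mono fun _ => le_of_lt
  have hnear' : ∀ᶠ s : ℝ in 𝓝 0, v - s • ψ ∈ polarDual (convexHull ℝ (S : Set (Fin n → ℝ))) := by
    simpa only [neg_smul, ← sub_eq_add_neg] using
      (continuous_neg.tendsto' (0 : ℝ) 0 neg_zero).eventually hnear
  obtain ⟨s, ⟨hs₁, hs₂⟩, hs⟩ :=
    ((hnear'.and hnear).filter_mono nhdsWithin_le_nhds |>.and
      (self_mem_nhdsWithin (s := Set.Ioi (0 : ℝ)))).exists
  have h := hv.2 hs₁ hs₂ (mem_openSegment_sub_add v (s • ψ))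
  rw [sub_eq_self, smul_eq_zero] at h
  exact h.resolve_left (ne_of_gt hs)

lemma mem_extremePoints_polarDual {S : Finset (Fin n → ℝ)} {v : Fin n → ℝ}
    (hv : v ∈ polarDual (convexHull ℝ (S : Set (Fin n → ℝ))))
    (hspan : ∀ ψ : Fin n → ℝ, (∀ w ∈ facet S v, ψ ⬝ᵥ w = 0) → ψ = 0) :
    v ∈ (polarDual (convexHull ℝ (S : Set (Fin n → ℝ)))).extremePoints ℝ := by
  refine ⟨hv, fun v₁ h₁ v₂ h₂ hseg => ?_⟩
  obtain ⟨a₁, a₂, ha₁, ha₂, hsum, rfl⟩ := hseg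
  have htight : ∀ w ∈ facet S (a₁ • v₁ + a₂ • v₂), v₁ ⬝ᵥ w = -1 ∧ v₂ ⬝ᵥ w = -1 := by
    intro w hw
    obtain ⟨hwS, hvw⟩ := mem_facet.1 hw
    have e₁ := h₁ w (subset_convexHull ℝ _ hwS)
    have e₂ := h₂ w (subset_convexHull ℝ _ hwS)
    rw [add_dotProduct, smul_dotProduct, smul_dotProduct, smul_eq_mul, smul_eq_mul] at hvw
    constructor <;> nlinarith
  have h12 : v₁ = v₂ := sub_eq_zero.1 <| hspan _ fun w hw => by
    rw [sub_dotProduct, (htight w hw).1, (htight w hw).2, sub_self]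
  rw [← h12, ← add_smul, hsum, one_smul]

lemma exists_step_mem_polarDual {S : Finset (Fin n → ℝ)} {v ψ u₀ : Fin n → ℝ}
    (hv : v ∈ polarDual (convexHull ℝ (S : Set (Fin n → ℝ)))) (hu₀ : u₀ ∈ S)
    (hψu₀ : ψ ⬝ᵥ u₀ < 0) :
    ∃ t : ℝ, ∃ w ∈ S, ψ ⬝ᵥ w < 0 ∧ t * -(ψ ⬝ᵥ w) = 1 + v ⬝ᵥ w ∧
      v + t • ψ ∈ polarDual (convexHull ℝ (S : Set (Fin n → ℝ))) ∧
      t * -(ψ ⬝ᵥ u₀) ≤ 1 + v ⬝ᵥ u₀ := by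
  simp only [mem_polarDual_convexHull_iff, Finset.mem_coe] at hv ⊢
  obtain ⟨w, hwT, hwmin⟩ := (S.filter fun w => ψ ⬝ᵥ w < 0).exists_min_image
    (fun w => (1 + v ⬝ᵥ w) / -(ψ ⬝ᵥ w)) ⟨u₀, Finset.mem_filter.2 ⟨hu₀, hψu₀⟩⟩
  obtain ⟨hwS, hψw⟩ := Finset.mem_filter.1 hwT
  set t := (1 + v ⬝ᵥ w) / -(ψ ⬝ᵥ w)
  have ht : 0 ≤ t := div_nonneg (by linarith [hv w hwS]) (by linarith)
  have hle : ∀ w' ∈ S, ψ ⬝ᵥ w' < 0 → t * -(ψ ⬝ᵥ w') ≤ 1 + v ⬝ᵥ w' := fun w' hw' h =>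
    (le_div_iff₀ (by linarith)).1 (hwmin w' (Finset.mem_filter.2 ⟨hw', h⟩))
  refine ⟨t, w, hwS, hψw, div_mul_cancel₀ _ (by linarith), fun w' hw' => ?_, hle u₀ hu₀ hψu₀⟩
  rw [add_dotProduct, smul_dotProduct, smul_eq_mul]
  by_cases h : ψ ⬝ᵥ w' < 0
  · linarith [hle w' hw' h]
  · linarith [hv w' hw', mul_nonneg ht (not_lt.1 h)]

end PolarDual

lemma exists_neg_coeff_of_mem_extremePoints {E ι : Type*} [AddCommGroup E] [Module ℝ E]
    {A : Set E} (hA : Convex ℝ A) (h0 : 0 ∈ A) {x : E} (hx : x ∈ A.extremePoints ℝ)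
    (hx0 : x ≠ 0) {s : Finset ι} {b : ι → E} (hb : ∀ i ∈ s, b i ∈ A) {c : ι → ℝ}
    (hxc : ∑ i ∈ s, c i • b i = x) (hc : ∑ i ∈ s, c i < 1) : ∃ i ∈ s, c i < 0 := by
  by_contra! hc0
  rcases (Finset.sum_nonneg hc0).eq_or_lt with hσ | hσ
  · refine hx0 (hxc ▸ Finset.sum_eq_zero fun i hi => ?_)
    rw [(Finset.sum_eq_zero_iff_of_nonneg hc0).1 hσ.symm i hi, zero_smul]
  · set σ := ∑ i ∈ s, c i
    have hy : σ⁻¹ • x ∈ A := by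
      rw [← hxc, Finset.smul_sum]
      simp_rw [smul_smul]
      refine hA.sum_mem (fun i hi => mul_nonneg (inv_nonneg.2 hσ.le) (hc0 i hi)) ?_ hb
      rw [← Finset.mul_sum, inv_mul_cancel₀ hσ.ne']
    have hseg : x ∈ openSegment ℝ 0 (σ⁻¹ • x) :=
      ⟨1 - σ, σ, by linarith, hσ, by ring, by
        rw [smul_zero, zero_add, smul_smul, mul_inv_cancel₀ hσ.ne', one_smul]⟩
    exact hx0 (hx.2 h0 hy hseg).symm

section Lattice

variable {n : ℕ}

lemma isIntegral.neg {u : Fin n → ℝ} (hu : isIntegral u) : isIntegral (-u) := fun i =>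
  let ⟨z, hz⟩ := hu i
  ⟨-z, by rw [Pi.neg_apply, hz, Int.cast_neg]⟩

lemma isIntegral.one_le_dotProduct {x y : Fin n → ℝ} (hx : isIntegral x) (hy : isIntegral y)
    (hpos : 0 < x ⬝ᵥ y) : 1 ≤ x ⬝ᵥ y := by
  choose a ha using hx
  choose b hb using hy
  have hz : x ⬝ᵥ y = ((∑ i, a i * b i : ℤ) : ℝ) := by simp [dotProduct, ha, hb]
  rw [hz] at hpos ⊢
  exact_mod_cast (Int.cast_pos.1 hpos : (0 : ℤ) < _)

lemma isPrimitive.isIntegral {χ : Fin n → ℝ} (hχ : isPrimitive χ) : isIntegral χ :=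
  let ⟨c, hc, _⟩ := hχ
  fun i => ⟨c i, hc i⟩

lemma isIntegral_det_smul {M : Matrix (Fin n) (Fin n) ℝ} (hM : ∀ i, isIntegral (M i))
    {ψ : Fin n → ℝ} (hψ : isIntegral (M *ᵥ ψ)) : isIntegral (M.det • ψ) := by
  choose Mz hMz using hM
  choose z hz using hψ
  have hMcast : M = (Int.castRingHom ℝ).mapMatrix (Matrix.of Mz) := by
    ext i k
    exact hMz i k
  have hcramer : M.det • ψ = M.adjugate *ᵥ (M *ᵥ ψ) := by
    rw [mulVec_mulVec, adjugate_mul, smul_mulVec, one_mulVec]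
  intro i
  refine ⟨((Matrix.of Mz).adjugate *ᵥ z) i, ?_⟩
  have h := RingHom.map_mulVec (Int.castRingHom ℝ) (Matrix.of Mz).adjugate z i
  rw [← RingHom.mapMatrix_apply, RingHom.map_adjugate, ← hMcast] at h
  rw [hcramer, show M *ᵥ ψ = (Int.castRingHom ℝ) ∘ z from funext hz, ← h]
  rfl

lemma exists_pos_smul_isPrimitive {ψ : Fin n → ℝ} (hψ : ψ ≠ 0) {r : ℝ} (hr : r ≠ 0)
    (h : isIntegral (r • ψ)) : ∃ s : ℝ, 0 < s ∧ isPrimitive (s • ψ) := by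
  wlog hr₀ : 0 < r generalizing r
  · exact this (neg_ne_zero.2 hr) (by simpa only [neg_smul] using h.neg)
      (neg_pos.2 (lt_of_le_of_ne (not_lt.1 hr₀) hr))
  choose ζ hζ using h
  obtain ⟨k, hk⟩ : ∃ k, ζ k ≠ 0 := by
    by_contra! hζ0
    refine hψ (funext fun k => ?_)
    simpa [hζ0 k, hr] using hζ k
  have hg : (0 : ℤ) < Finset.univ.gcd ζ :=
    lt_of_le_of_ne (Int.nonneg_of_normalize_eq_self Finset.normalize_gcd)
      fun h => hk (Finset.gcd_eq_zero_iff.1 h.symm k (Finset.mem_univ k))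
  refine ⟨r / Finset.univ.gcd ζ, by positivity, fun i => ζ i / Finset.univ.gcd ζ, fun i => ?_,
    Finset.gcd_div_eq_one (Finset.mem_univ k) hk⟩
  rw [Int.cast_div_charZero (Finset.gcd_dvd (Finset.mem_univ i)), ← hζ i, Pi.smul_apply,
    Pi.smul_apply, smul_eq_mul, smul_eq_mul]
  ring

lemma exists_pos_smul_neg_isPrimitive {M : Matrix (Fin n) (Fin n) ℝ}
    (hM : ∀ i, isIntegral (M i)) (hdet : M.det ≠ 0) {j : Fin n} {ψ : Fin n → ℝ}
    (hMψ : M *ᵥ ψ = Pi.single j 1) : ∃ s : ℝ, 0 < s ∧ isPrimitive (s • -ψ) := by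
  have hψ0 : ψ ≠ 0 := fun h => by simpa [h] using congrFun hMψ j
  have hMψint : isIntegral (M *ᵥ ψ) := fun i =>
    ⟨if i = j then 1 else 0, by rw [hMψ, Pi.single_apply]; split_ifs <;> simp⟩
  refine exists_pos_smul_isPrimitive (neg_ne_zero.2 hψ0) hdet ?_
  rw [smul_neg]
  exact (isIntegral_det_smul hM hMψint).neg

end Lattice

lemma det_updateRow_ne_zero {n : ℕ} {M : Matrix (Fin n) (Fin n) ℝ} (hM : M.det ≠ 0)
    {w : Fin n → ℝ} {j : Fin n} (hw : (w ᵥ* M⁻¹) j ≠ 0) : (M.updateRow j w).det ≠ 0 := by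
  have hw' : ∑ k, (w ᵥ* M⁻¹) k • M k = w := by
    rw [← vecMul_eq_sum, vecMul_vecMul, nonsing_inv_mul _ (isUnit_iff_ne_zero.2 hM), vecMul_one]
  rw [← hw', det_updateRow_sum, smul_eq_mul]
  exact mul_ne_zero hw hM

lemma dotProduct_row_of_mulVec_eq {n : ℕ} {M : Matrix (Fin n) (Fin n) ℝ} {ψ y : Fin n → ℝ}
    (h : M *ᵥ ψ = y) (i : Fin n) : ψ ⬝ᵥ M i = y i := by
  rw [← h, dotProduct_comm]
  rfl

section FacetMatrix

variable {n : ℕ} {VQ : Finset (Fin n → ℝ)} {v : Fin n → ℝ} {M : Matrix (Fin n) (Fin n) ℝ}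

def IsFacetMatrix (VQ : Finset (Fin n → ℝ)) (v : Fin n → ℝ) (M : Matrix (Fin n) (Fin n) ℝ) :
    Prop :=
  (∀ i, M i ∈ facet VQ v) ∧ M.det ≠ 0

lemma exists_isFacetMatrix
    (hv : v ∈ (polarDual (convexHull ℝ (VQ : Set (Fin n → ℝ)))).extremePoints ℝ)
    (hcard : (facet VQ v).card = n) : ∃ M, IsFacetMatrix VQ v M := by
  set e := (facet VQ v).equivFinOfCardEq hcard
  refine ⟨fun i => e.symm i, fun i => (e.symm i).2, fun hdet => ?_⟩
  obtain ⟨ψ, hψ0, hψ⟩ := exists_mulVec_eq_zero_iff.2 hdet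
  refine hψ0 (eq_zero_of_mem_extremePoints_polarDual hv fun w hw => ?_)
  simpa [mulVec, dotProduct_comm] using congrFun hψ (e ⟨w, hw⟩)

lemma IsFacetMatrix.mem_extremePoints (hM : IsFacetMatrix VQ v M)
    (hv : v ∈ polarDual (convexHull ℝ (VQ : Set (Fin n → ℝ)))) :
    v ∈ (polarDual (convexHull ℝ (VQ : Set (Fin n → ℝ)))).extremePoints ℝ := by
  refine mem_extremePoints_polarDual hv fun ψ hψ => ?_
  by_contra hψ0
  refine hM.2 (exists_mulVec_eq_zero_iff.1 ⟨ψ, hψ0, funext fun i => ?_⟩)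
  rw [Pi.zero_apply, ← hψ (M i) (hM.1 i), dotProduct_comm]
  rfl

lemma IsFacetMatrix.exists_row_eq (hM : IsFacetMatrix VQ v M) (hcard : (facet VQ v).card = n) :
    ∀ w ∈ facet VQ v, ∃ i, M i = w := by
  have hinj : Function.Injective M := fun i k h =>
    by_contra fun hik => hM.2 (det_zero_of_row_eq hik h)
  have himage : Finset.univ.image M = facet VQ v :=
    Finset.eq_of_subset_of_card_le (Finset.image_subset_iff.2 fun i _ => hM.1 i)
      (by rw [hcard, Finset.card_image_of_injective _ hinj, Finset.card_univ, Fintype.card_fin])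
  intro w hw
  obtain ⟨i, -, hi⟩ := Finset.mem_image.1 (himage ▸ hw)
  exact ⟨i, hi⟩

end FacetMatrix

section Polytope

variable {n : ℕ} {VQ VQd : Finset (Fin n → ℝ)}

lemma exists_ridge_functional (hn : 1 ≤ n)
    (hVQ : (VQ : Set (Fin n → ℝ)) = Set.extremePoints ℝ (convexHull ℝ (VQ : Set (Fin n → ℝ))))
    (h0 : (0 : Fin n → ℝ) ∈ interior (convexHull ℝ (VQ : Set (Fin n → ℝ))))
    {v₀ : Fin n → ℝ} {M : Matrix (Fin n) (Fin n) ℝ} (hM : IsFacetMatrix VQ v₀ M)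
    {u₀ : Fin n → ℝ} (hu₀ : u₀ ∈ VQ) (hvu : -1 < v₀ ⬝ᵥ u₀) :
    ∃ j ψ, M *ᵥ ψ = Pi.single j 1 ∧ ψ ⬝ᵥ u₀ < 0 := by
  have : Nonempty (Fin n) := ⟨⟨0, hn⟩⟩
  have hu₀ext : u₀ ∈ (convexHull ℝ (VQ : Set (Fin n → ℝ))).extremePoints ℝ :=
    hVQ ▸ Finset.mem_coe.2 hu₀
  have hu₀0 : u₀ ≠ 0 := ((disjoint_interior_extremePoints _).ne_of_mem h0 hu₀ext).symm
  have hM' := isUnit_iff_ne_zero.2 hM.2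
  set c := u₀ ᵥ* M⁻¹
  have hcu₀ : ∑ i, c i • M i = u₀ := by
    rw [← vecMul_eq_sum, vecMul_vecMul, nonsing_inv_mul _ hM', vecMul_one]
  have hcsum : ∑ i, c i = -(v₀ ⬝ᵥ u₀) := by
    simp [← hcu₀, dotProduct_sum, dotProduct_smul, (mem_facet.1 (hM.1 _)).2]
  obtain ⟨j, -, hcj⟩ := exists_neg_coeff_of_mem_extremePoints (convex_convexHull ℝ _)
    (interior_subset h0) hu₀ext hu₀0 (fun i _ => subset_convexHull ℝ _ (mem_facet.1 (hM.1 i)).1)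
    hcu₀ (by linarith)
  refine ⟨j, M⁻¹ *ᵥ Pi.single j 1, by rw [mulVec_mulVec, mul_nonsing_inv _ hM', one_mulVec], ?_⟩
  rwa [dotProduct_comm, dotProduct_mulVec, dotProduct_single, mul_one]

lemma exists_adjacent_vertex
    (hVQd : (VQd : Set (Fin n → ℝ)) =
      Set.extremePoints ℝ (polarDual (convexHull ℝ (VQ : Set (Fin n → ℝ)))))
    (hsimp : ∀ v ∈ VQd, (facet VQ v).card = n)
    {v₀ : Fin n → ℝ} (hv₀ : v₀ ∈ VQd) {M : Matrix (Fin n) (Fin n) ℝ}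
    (hM : IsFacetMatrix VQ v₀ M) {j : Fin n} {ψ : Fin n → ℝ}
    (hMψ : M *ᵥ ψ = Pi.single j 1) {u₀ : Fin n → ℝ} (hu₀ : u₀ ∈ VQ) (hψu₀ : ψ ⬝ᵥ u₀ < 0) :
    ∃ t : ℝ, ∃ w ∈ VQ, ψ ⬝ᵥ w < 0 ∧ t * -(ψ ⬝ᵥ w) = 1 + v₀ ⬝ᵥ w ∧
      t * -(ψ ⬝ᵥ u₀) ≤ 1 + v₀ ⬝ᵥ u₀ ∧ v₀ + t • ψ ∈ VQd ∧
      ∀ w' ∈ facet VQ (v₀ + t • ψ), w' ≠ w → ∃ i ≠ j, M i = w' := by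
  have hv₀' : v₀ ∈ polarDual (convexHull ℝ (VQ : Set (Fin n → ℝ))) :=
    extremePoints_subset (hVQd ▸ Finset.mem_coe.2 hv₀)
  obtain ⟨t, w, hw, hψw, htw, hv', htu₀⟩ := exists_step_mem_polarDual hv₀' hu₀ hψu₀
  have hcoord : (w ᵥ* M⁻¹) j = ψ ⬝ᵥ w := by
    rw [show ψ = M⁻¹ *ᵥ Pi.single j 1 by
        rw [← hMψ, mulVec_mulVec, nonsing_inv_mul _ (isUnit_iff_ne_zero.2 hM.2), one_mulVec],
      dotProduct_comm, dotProduct_mulVec, dotProduct_single, mul_one]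
  have hM' : IsFacetMatrix VQ (v₀ + t • ψ) (M.updateRow j w) := by
    refine ⟨fun i => ?_, det_updateRow_ne_zero hM.2 (hcoord ▸ hψw.ne)⟩
    rw [mem_facet, add_dotProduct, smul_dotProduct, smul_eq_mul]
    rcases eq_or_ne i j with rfl | hij
    · exact ⟨by rwa [updateRow_self], by rw [updateRow_self]; linarith⟩
    · obtain ⟨hMi, hv₀Mi⟩ := mem_facet.1 (hM.1 i)
      rw [updateRow_ne hij, dotProduct_row_of_mulVec_eq hMψ, Pi.single_eq_of_ne hij, hv₀Mi]
      exact ⟨hMi, by ring⟩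
  have hv'VQd : v₀ + t • ψ ∈ VQd := by
    rw [← Finset.mem_coe, hVQd]
    exact hM'.mem_extremePoints hv'
  refine ⟨t, w, hw, hψw, htw, htu₀, hv'VQd, fun w' hw' hne => ?_⟩
  obtain ⟨i, rfl⟩ := hM'.exists_row_eq (hsimp _ hv'VQd) w' hw'
  rcases eq_or_ne i j with rfl | hij
  · exact absurd updateRow_self hne
  · exact ⟨i, hij, (updateRow_ne hij).symm⟩

lemma exists_mem_iotaSet_le (hn : 1 ≤ n)
    (hVQ : (VQ : Set (Fin n → ℝ)) = Set.extremePoints ℝ (convexHull ℝ (VQ : Set (Fin n → ℝ))))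
    (h0 : (0 : Fin n → ℝ) ∈ interior (convexHull ℝ (VQ : Set (Fin n → ℝ))))
    (hVQd : (VQd : Set (Fin n → ℝ)) =
      Set.extremePoints ℝ (polarDual (convexHull ℝ (VQ : Set (Fin n → ℝ)))))
    (hsimp : ∀ v ∈ VQd, (facet VQ v).card = n) (hrefl : ∀ u ∈ VQ, isIntegral u)
    {u₀ v₀ : Fin n → ℝ} (hu₀ : u₀ ∈ VQ) (hv₀ : v₀ ∈ VQd) (hvu : v₀ ⬝ᵥ u₀ ≠ -1) :
    ∃ x ∈ iotaSet VQ VQd, x ≤ 1 + v₀ ⬝ᵥ u₀ := by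
  have hv₀ext : v₀ ∈ (polarDual (convexHull ℝ (VQ : Set (Fin n → ℝ)))).extremePoints ℝ :=
    hVQd ▸ Finset.mem_coe.2 hv₀
  obtain ⟨M, hM⟩ := exists_isFacetMatrix hv₀ext (hsimp v₀ hv₀)
  obtain ⟨j, ψ, hMψ, hψu₀⟩ := exists_ridge_functional hn hVQ h0 hM hu₀
    (lt_of_le_of_ne (hv₀ext.1 u₀ (subset_convexHull ℝ _ hu₀)) hvu.symm)
  have hψrow := dotProduct_row_of_mulVec_eq hMψ
  obtain ⟨s, hs, hχ⟩ :=
    exists_pos_smul_neg_isPrimitive (fun i => hrefl _ (mem_facet.1 (hM.1 i)).1) hM.2 hMψ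
  have hχ_dot : ∀ x, (s • -ψ) ⬝ᵥ x = s * -(ψ ⬝ᵥ x) := fun x => by
    rw [smul_dotProduct, neg_dotProduct, smul_eq_mul]
  obtain ⟨t, w, hw, hψw, htw, htu₀, hv', hfacet'⟩ :=
    exists_adjacent_vertex hVQd hsimp hv₀ hM hMψ hu₀ hψu₀
  have hv₀w : v₀ ⬝ᵥ w ≠ -1 := fun h => by
    obtain ⟨i, rfl⟩ := hM.exists_row_eq (hsimp v₀ hv₀) w (mem_facet.2 ⟨hw, h⟩)
    rw [hψrow, Pi.single_apply] at hψw
    split_ifs at hψw <;> norm_num at hψw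
  have hv'w : (v₀ + t • ψ) ⬝ᵥ w = -1 := by
    rw [add_dotProduct, smul_dotProduct, smul_eq_mul]
    linarith
  refine ⟨t / s, ⟨v₀, hv₀, v₀ + t • ψ, hv', fun h => hv₀w (h ▸ hv'w), w, hw, hv'w, hv₀w, ?_,
    s • -ψ, hχ, ?_, ?_, ?_⟩, ?_⟩
  · intro w' hw' hvw' hne
    obtain ⟨i, -, rfl⟩ := hfacet' w' (mem_facet.2 ⟨hw', hvw'⟩) hne
    exact (mem_facet.1 (hM.1 i)).2
  · intro w' hw' hvw' hne
    obtain ⟨i, hij, rfl⟩ := hfacet' w' (mem_facet.2 ⟨hw', hvw'⟩) hne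
    rw [hχ_dot, hψrow, Pi.single_eq_of_ne hij, neg_zero, mul_zero]
  · rw [hχ_dot]
    exact mul_pos hs (by linarith)
  · rw [hχ_dot, ← htw]
    exact (mul_div_mul_right t s (neg_ne_zero.2 hψw.ne)).symm
  · have ht : 0 ≤ t := (mul_nonneg_iff_of_pos_right (neg_pos.2 hψw)).1 (by
      rw [htw]
      linarith [hv₀ext.1 w (subset_convexHull ℝ _ hw)])
    have hχu₀ : 1 ≤ (s • -ψ) ⬝ᵥ u₀ := hχ.isIntegral.one_le_dotProduct (hrefl u₀ hu₀) (by
      rw [hχ_dot]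
      exact mul_pos hs (by linarith))
    calc t / s ≤ t / s * ((s • -ψ) ⬝ᵥ u₀) := le_mul_of_one_le_right (by positivity) hχu₀
      _ = t * -(ψ ⬝ᵥ u₀) := by rw [hχ_dot]; field_simp
      _ ≤ 1 + v₀ ⬝ᵥ u₀ := htu₀

end Polytope

theorem iota_le_eps_general {n : ℕ} (hn : 1 ≤ n)
    (VQ VQd : Finset (Fin n → ℝ))
    -- `VQ` is the vertex set of the polytope `Q = conv(VQ)`
    (hVQ : (VQ : Set (Fin n → ℝ)) =
      Set.extremePoints ℝ (convexHull ℝ (VQ : Set (Fin n → ℝ))))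
    -- `0` lies in the interior of `Q` (in particular `Q` is full-dimensional)
    (h0 : (0 : Fin n → ℝ) ∈ interior (convexHull ℝ (VQ : Set (Fin n → ℝ))))
    -- `VQd` is the vertex set of the polar dual `Q*`
    (hVQd : (VQd : Set (Fin n → ℝ)) =
      Set.extremePoints ℝ (polarDual (convexHull ℝ (VQ : Set (Fin n → ℝ)))))
    -- `Q` is simplicial: every facet has exactly `n` vertices
    (hsimp : ∀ v ∈ VQd, (VQ.filter fun u => v ⬝ᵥ u = -1).card = n)
    -- `Q` is reflexive: vertices of `Q` and of `Q*` are lattice points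
    (hrefl : ∀ u ∈ VQ, isIntegral u)
    -- `ε` is the minimum `ε_Q` for the constant weight `a ≡ 1`
    (ε : ℝ) (hε : IsLeast (epsSet VQ VQd fun _ => 1) ε)
    -- `ι` is the pseudo-index `ι_Q`
    (ι : ℝ) (hι : IsLeast (iotaSet VQ VQd) ι) :
    ι ≤ ε := by
  obtain ⟨u₀, hu₀, v₀, hv₀, hvu, rfl⟩ := hε.1
  obtain ⟨x, hx, hxle⟩ := exists_mem_iotaSet_le hn hVQ h0 hVQd hsimp hrefl hu₀ hv₀ hvu
  rw [one_mul]
  exact (hι.2 hx).trans hxle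

/-- For a full-dimensional simplicial reflexive polytope `Q ⊂ ℝ^n` with the
constant weight `a ≡ 1`, the pseudo-index `ι_Q` satisfies `ι_Q ≤ ε_Q`. -/
theorem iota_le_eps {n : ℕ} (hn : 1 ≤ n)
    (VQ VQd : Finset (Fin n → ℝ))
    -- `VQ` is the vertex set of the polytope `Q = conv(VQ)`
    (hVQ : (VQ : Set (Fin n → ℝ)) =
      Set.extremePoints ℝ (convexHull ℝ (VQ : Set (Fin n → ℝ))))
    -- `0` lies in the interior of `Q` (in particular `Q` is full-dimensional)
    (h0 : (0 : Fin n → ℝ) ∈ interior (convexHull ℝ (VQ : Set (Fin n → ℝ))))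
    -- `VQd` is the vertex set of the polar dual `Q*`
    (hVQd : (VQd : Set (Fin n → ℝ)) =
      Set.extremePoints ℝ (polarDual (convexHull ℝ (VQ : Set (Fin n → ℝ)))))
    -- `Q` is simplicial: every facet has exactly `n` vertices
    (hsimp : ∀ v ∈ VQd, (VQ.filter fun u => v ⬝ᵥ u = -1).card = n)
    -- `Q` is reflexive: vertices of `Q` and of `Q*` are lattice points
    (hrefl : ∀ u ∈ VQ, isIntegral u) (hrefld : ∀ v ∈ VQd, isIntegral v)
    -- `ε` is the minimum `ε_Q` for the constant weight `a ≡ 1`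
    (ε : ℝ) (hε : IsLeast (epsSet VQ VQd fun _ => 1) ε)
    -- `ι` is the pseudo-index `ι_Q`
    (ι : ℝ) (hι : IsLeast (iotaSet VQ VQd) ι) :
    ι ≤ ε :=
  iota_le_eps_general hn VQ VQd hVQ h0 hVQd hsimp hrefl ε hε ι hι
end
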